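/- Let N = 2M ≥ 4 be an even integer. Then the stabiliser of x* in G is exactly the four-element set {id, r^M ∘ s, r^M ∘ c, s ∘ c}, and the orbit {g x* : g ∈ G} has exactly N elements. -/

import Mathlib

/-!
Every element of `G` acts as `y ↦ ε • (y ∘ (i ↦ u i + k))` with `ε, u = ±1` and `k ∈ ℤ/N`.
The configuration `x*` is antiperiodic under the half-turn (`x*(i + M) = -x*(i)`) and odd under
the reflection `i ↦ -i - 1`, so every such map sends `x*` to a translate `x*(· + t)`; these
translates are pairwise distinct, which gives the orbit. For the stabiliser, `g x* = x*` forces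
the translation to vanish, which pins down `k` for each of the four choices of `(ε, u)`.
-/

/-- The cyclic shift `(r x)ᵢ = x_{i+1}` as a linear automorphism of `ℝ^N`. -/
noncomputable def rmap (N : ℕ) [NeZero N] : (Fin N → ℝ) ≃ₗ[ℝ] (Fin N → ℝ) :=
  LinearEquiv.funCongrLeft ℝ ℝ (Equiv.addRight (1 : Fin N))

/-- The reflection `(s x)ᵢ = x_{N+1-i}` (in cyclic 0-based indexing, `(s x)ᵢ = x_{-i-1}`)
as a linear automorphism of `ℝ^N`. -/
noncomputable def smap (N : ℕ) [NeZero N] : (Fin N → ℝ) ≃ₗ[ℝ] (Fin N → ℝ) :=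
  LinearEquiv.funCongrLeft ℝ ℝ ((Equiv.neg (Fin N)).trans (Equiv.subRight (1 : Fin N)))

/-- The spin flip `(c x)ᵢ = -xᵢ` as a linear automorphism of `ℝ^N`. -/
noncomputable def cmap (N : ℕ) : (Fin N → ℝ) ≃ₗ[ℝ] (Fin N → ℝ) :=
  LinearEquiv.neg ℝ

/-- The symmetry group `G ≅ D_N × ℤ₂` of the model: the group of linear automorphisms of
`ℝ^N` generated by `r`, `s` and `c`. -/
noncomputable def Gsym (N : ℕ) [NeZero N] : Subgroup ((Fin N → ℝ) ≃ₗ[ℝ] (Fin N → ℝ)) :=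
  Subgroup.closure {rmap N, smap N, cmap N}

open scoped Fin.NatCast Fin.CommRing

noncomputable def signedAffineSubgroup (N : ℕ) [NeZero N] :
    Subgroup ((Fin N → ℝ) ≃ₗ[ℝ] (Fin N → ℝ)) where
  carrier := {g | ∃ ε : ℝ, ∃ u k : Fin N, (ε = 1 ∨ ε = -1) ∧ (u = 1 ∨ u = -1) ∧
    ∀ y i, g y i = ε * y (u * i + k)}
  one_mem' := ⟨1, 1, 0, .inl rfl, .inl rfl, by simp⟩
  mul_mem' := by
    rintro g h ⟨ε, u, k, hε, hu, hg⟩ ⟨ε', u', k', hε', hu', hh⟩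
    refine ⟨ε * ε', u' * u, u' * k + k', ?_, ?_, fun y i => ?_⟩
    · rcases hε with rfl | rfl <;> rcases hε' with rfl | rfl <;> norm_num
    · rcases hu with rfl | rfl <;> rcases hu' with rfl | rfl <;> simp
    · rw [LinearEquiv.mul_apply, hg, hh, mul_assoc, mul_add, mul_assoc, add_assoc]
  inv_mem' := by
    rintro g ⟨ε, u, k, hε, hu, hg⟩
    refine ⟨ε, u, -(u * k), hε, hu, fun y i => ?_⟩
    have hy := hg (g⁻¹ y) (u * i + -(u * k))
    have hui : u * (u * i + -(u * k)) + k = i := by rcases hu with rfl | rfl <;> ring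
    rw [hui, show g (g⁻¹ y) = y from g.apply_symm_apply y] at hy
    rw [hy]
    rcases hε with rfl | rfl <;> ring

section Generators

variable (N : ℕ)

lemma cmap_apply (y : Fin N → ℝ) : cmap N y = -y := rfl

variable [NeZero N]

lemma rmap_apply (y : Fin N → ℝ) (i : Fin N) : rmap N y i = y (i + 1) := by
  simp [rmap, LinearEquiv.funCongrLeft]

lemma smap_apply (y : Fin N → ℝ) (i : Fin N) : smap N y i = y (-i - 1) := by
  simp [smap, LinearEquiv.funCongrLeft]

lemma rmap_pow_apply (n : ℕ) (y : Fin N → ℝ) (i : Fin N) :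
    (rmap N ^ n) y i = y (i + n) := by
  induction n generalizing y i with
  | zero => simp
  | succ n ih => rw [pow_succ, LinearEquiv.mul_apply, ih, rmap_apply, Nat.cast_succ, add_assoc]

lemma Gsym_le_signedAffineSubgroup : Gsym N ≤ signedAffineSubgroup N := by
  rw [Gsym, Subgroup.closure_le]
  rintro g (rfl | rfl | rfl)
  · exact ⟨1, 1, 1, .inl rfl, .inl rfl, fun y i => by simp [rmap_apply]⟩
  · exact ⟨1, -1, -1, .inl rfl, .inr rfl, fun y i => by simp [smap_apply, sub_eq_add_neg]⟩
  · exact ⟨-1, 1, 0, .inr rfl, .inl rfl, fun y i => by simp [cmap_apply]⟩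

end Generators

def kink (N M : ℕ) : Fin N → ℝ := fun i => if (i : ℕ) < M then 1 else -1

section Kink

variable {N M : ℕ} [NeZero N]

lemma kink_add_half (hNM : N = 2 * M) (i : Fin N) : kink N M (i + M) = -kink N M i := by
  have hN := NeZero.ne N
  have hi := i.isLt
  have hval : ((i + M : Fin N) : ℕ) = if (i : ℕ) < M then (i : ℕ) + M else (i : ℕ) - M := by
    rw [Fin.val_add_eq_ite, Fin.val_natCast, Nat.mod_eq_of_lt (by omega)]
    split_ifs <;> omega
  unfold kink
  rw [hval]
  split_ifs <;> first | omega | norm_num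

lemma kink_neg_sub_one (hNM : N = 2 * M) (i : Fin N) : kink N M (-i - 1) = -kink N M i := by
  have hi := i.isLt
  have hcast := congrArg (Nat.cast : ℕ → Fin N) (show (N - 1 - i : ℕ) + (i + 1) = N by omega)
  push_cast [Fin.natCast_self, Fin.cast_val_eq_self] at hcast
  have hval : ((-i - 1 : Fin N) : ℕ) = N - 1 - i := by
    rw [← neg_add', ← eq_neg_of_add_eq_zero_left hcast, Fin.val_natCast,
      Nat.mod_eq_of_lt (by omega)]
  unfold kink
  rw [hval]
  split_ifs <;> first | omega | norm_num

lemma kink_reflect (hNM : N = 2 * M) (i k : Fin N) :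
    kink N M (-1 * i + k) = -kink N M (i + (-k - 1)) := by
  rw [← kink_neg_sub_one hNM]
  ring_nf

lemma eq_zero_of_kink_add_eq (hNM : N = 2 * M) {t : Fin N}
    (ht : ∀ i, kink N M (i + t) = kink N M i) : t = 0 := by
  have hN := NeZero.ne N
  have htN := t.isLt
  by_contra ht0
  have ht0' : (t : ℕ) ≠ 0 := fun h => ht0 (Fin.ext h)
  rcases Nat.lt_or_ge (t : ℕ) M with htM | htM
  · have h := ht ⟨M - t, by omega⟩
    have hval : ((⟨M - t, by omega⟩ + t : Fin N) : ℕ) = M := by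
      rw [Fin.val_add_eq_ite]
      dsimp only
      split_ifs <;> omega
    unfold kink at h
    rw [hval, if_neg (lt_irrefl M), if_pos (show M - (t : ℕ) < M by omega)] at h
    norm_num at h
  · have h := ht 0
    unfold kink at h
    rw [zero_add, if_neg (by omega), Fin.val_zero, if_pos (by omega)] at h
    norm_num at h

lemma kink_add_injective (hNM : N = 2 * M) :
    Function.Injective (fun t : Fin N => fun i => kink N M (i + t)) := by
  intro t t' h
  rw [← sub_eq_zero]
  refine eq_zero_of_kink_add_eq hNM fun i => ?_
  convert congrFun h (i - t') using 2 <;> ring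

end Kink

section Symmetries

variable {N M : ℕ} [NeZero N]

lemma rmap_pow_half_kink (hNM : N = 2 * M) : (rmap N ^ M) (kink N M) = -kink N M :=
  funext fun i => by rw [rmap_pow_apply, kink_add_half hNM, Pi.neg_apply]

lemma smap_kink (hNM : N = 2 * M) : smap N (kink N M) = -kink N M :=
  funext fun i => by rw [smap_apply, kink_neg_sub_one hNM, Pi.neg_apply]

lemma eq_of_mem_Gsym_of_apply_kink (hNM : N = 2 * M) {g : (Fin N → ℝ) ≃ₗ[ℝ] (Fin N → ℝ)}
    (hg : g ∈ Gsym N) (hfix : g (kink N M) = kink N M) :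
    g = 1 ∨ g = rmap N ^ M * smap N ∨ g = rmap N ^ M * cmap N ∨ g = smap N * cmap N := by
  obtain ⟨ε, u, k, hε, hu, hgε⟩ := Gsym_le_signedAffineSubgroup N hg
  have hfix' : ∀ i, ε * kink N M (u * i + k) = kink N M i := fun i => by rw [← hgε, hfix]
  rcases hε with rfl | rfl <;> rcases hu with rfl | rfl
  · have hk : k = 0 := kink_add_injective hNM (funext fun i => by simpa using hfix' i)
    left
    ext y i
    simp [hgε, hk]
  · have hk : -k - 1 = M := kink_add_injective hNM (funext fun i => by
      dsimp only
      rw [kink_add_half hNM, ← hfix' i, kink_reflect hNM, one_mul, neg_neg])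
    right; left
    ext y i
    rw [hgε, LinearEquiv.mul_apply, rmap_pow_apply, smap_apply, one_mul]
    congr 1
    linear_combination -hk
  · have hk : k = M := kink_add_injective hNM (funext fun i => by
      dsimp only
      rw [kink_add_half hNM, ← hfix' i]
      simp)
    right; right; left
    ext y i
    rw [hgε, LinearEquiv.mul_apply, rmap_pow_apply, cmap_apply, hk]
    simp
  · have hk : -k - 1 = 0 := kink_add_injective hNM (funext fun i => by
      dsimp only
      rw [add_zero, ← hfix' i, kink_reflect hNM]
      ring)
    right; right; right
    ext y i
    rw [hgε, LinearEquiv.mul_apply, smap_apply, cmap_apply, neg_one_mul]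
    congr 2
    linear_combination -hk

lemma stabilizer_kink (hNM : N = 2 * M) :
    {g : (Fin N → ℝ) ≃ₗ[ℝ] (Fin N → ℝ) | g ∈ Gsym N ∧ g (kink N M) = kink N M} =
      {1, rmap N ^ M * smap N, rmap N ^ M * cmap N, smap N * cmap N} := by
  have hr : rmap N ∈ Gsym N := Subgroup.subset_closure (by simp)
  have hs : smap N ∈ Gsym N := Subgroup.subset_closure (by simp)
  have hc : cmap N ∈ Gsym N := Subgroup.subset_closure (by simp)
  ext g
  refine ⟨fun ⟨hg, hfix⟩ => eq_of_mem_Gsym_of_apply_kink hNM hg hfix, ?_⟩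
  rintro (rfl | rfl | rfl | rfl)
  · exact ⟨one_mem _, rfl⟩
  · refine ⟨mul_mem (pow_mem hr M) hs, ?_⟩
    rw [LinearEquiv.mul_apply, smap_kink hNM, map_neg, rmap_pow_half_kink hNM, neg_neg]
  · refine ⟨mul_mem (pow_mem hr M) hc, ?_⟩
    rw [LinearEquiv.mul_apply, cmap_apply, map_neg, rmap_pow_half_kink hNM, neg_neg]
  · refine ⟨mul_mem hs hc, ?_⟩
    rw [LinearEquiv.mul_apply, cmap_apply, map_neg, smap_kink hNM, neg_neg]

lemma Gsym_orbit_kink (hNM : N = 2 * M) :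
    {y : Fin N → ℝ | ∃ g ∈ Gsym N, g (kink N M) = y} =
      Set.range (fun t : Fin N => fun i => kink N M (i + t)) := by
  ext y
  constructor
  · rintro ⟨g, hg, rfl⟩
    obtain ⟨ε, u, k, hε, hu, hgε⟩ := Gsym_le_signedAffineSubgroup N hg
    rcases hε with rfl | rfl <;> rcases hu with rfl | rfl
    · exact ⟨k, funext fun i => by simp [hgε]⟩
    · refine ⟨-k - 1 + M, funext fun i => ?_⟩
      dsimp only
      rw [hgε, ← add_assoc, kink_add_half hNM, kink_reflect hNM, one_mul]
    · refine ⟨k + M, funext fun i => ?_⟩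
      dsimp only
      rw [hgε, ← add_assoc, kink_add_half hNM, one_mul, neg_one_mul]
    · refine ⟨-k - 1, funext fun i => ?_⟩
      rw [hgε, kink_reflect hNM, neg_one_mul, neg_neg]
  · rintro ⟨t, rfl⟩
    refine ⟨rmap N ^ (t : ℕ), pow_mem (Subgroup.subset_closure (by simp)) _, funext fun i => ?_⟩
    rw [rmap_pow_apply, Fin.cast_val_eq_self]

end Symmetries

theorem stmt_15 (N M : ℕ) (hNM : N = 2 * M) [NeZero N]
    (x : Fin N → ℝ) (hx : ∀ i : Fin N, x i = if (i : ℕ) < M then 1 else -1) :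
    {g : (Fin N → ℝ) ≃ₗ[ℝ] (Fin N → ℝ) | g ∈ Gsym N ∧ g x = x} =
      {1, rmap N ^ M * smap N, rmap N ^ M * cmap N, smap N * cmap N} ∧
    {y : Fin N → ℝ | ∃ g ∈ Gsym N, g x = y}.ncard = N := by
  obtain rfl : x = kink N M := funext hx
  refine ⟨stabilizer_kink hNM, ?_⟩
  rw [Gsym_orbit_kink hNM, Set.ncard_range_of_injective (kink_add_injective hNM), Nat.card_fin]
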